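/- The weight of any path from the start vertex to a goal vertex g in the scheduling graph equals the total cost Cost(R, g_s) of the complete schedule g_s, i.e., the sum over VMs of the start-up cost plus per-query running costs, plus the final penalty P(R, g_s). Hence a minimum-weight path from the start vertex to any goal vertex yields a minimum-cost complete schedule. -/

import Mathlib

/-- A vertex of the scheduling graph. -/
structure SVertex (Query VMType : Type) where
  vms : List (VMType × List Query)
  unassigned : Multiset Query

/-- An action (edge label): provision a new VM of type `i`, or place query `q`
on the most recently provisioned VM. -/
inductive SEdge (Query VMType : Type) where
  | startup (i : VMType)
  | place (q : Query)

variable {Query VMType : Type}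

/-- The effect of an edge on a vertex. -/
def applyEdge [DecidableEq Query] (v : SVertex Query VMType) :
    SEdge Query VMType → SVertex Query VMType
  | .startup i => ⟨(i, []) :: v.vms, v.unassigned⟩
  | .place q =>
      match v.vms with
      | [] => v
      | hd :: tl => ⟨(hd.1, hd.2 ++ [q]) :: tl, v.unassigned.erase q⟩

/-- Validity of taking an edge at a vertex. -/
def validEdge (v : SVertex Query VMType) : SEdge Query VMType → Prop
  | .startup _ => True
  | .place q => v.vms ≠ [] ∧ q ∈ v.unassigned

/-- The vertex reached after following a list of edges. -/
def runPath [DecidableEq Query] (v : SVertex Query VMType) :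
    List (SEdge Query VMType) → SVertex Query VMType
  | [] => v
  | e :: es => runPath (applyEdge v e) es

/-- Validity of a whole path. -/
def ValidPath [DecidableEq Query] (v : SVertex Query VMType) :
    List (SEdge Query VMType) → Prop
  | [] => True
  | e :: es => validEdge v e ∧ ValidPath (applyEdge v e) es

/-- Edge weight: `f^i_s` for a start-up edge, and
`l(q,i)·f^i_r + P(v_s after) − P(v_s before)` for a placement edge. -/
def edgeWeight [DecidableEq Query] (P : List (VMType × List Query) → ℝ)
    (f_s f_r : VMType → ℝ) (l : Query → VMType → ℝ)
    (v : SVertex Query VMType) : SEdge Query VMType → ℝ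
  | .startup i => f_s i
  | .place q =>
      match v.vms with
      | [] => 0
      | hd :: _ => l q hd.1 * f_r hd.1 +
          (P (applyEdge v (.place q)).vms - P v.vms)

/-- Total weight of a path. -/
def pathWeight [DecidableEq Query] (P : List (VMType × List Query) → ℝ)
    (f_s f_r : VMType → ℝ) (l : Query → VMType → ℝ)
    (v : SVertex Query VMType) : List (SEdge Query VMType) → ℝ
  | [] => 0
  | e :: es => edgeWeight P f_s f_r l v e + pathWeight P f_s f_r l (applyEdge v e) es

/-! Every edge weight is the increase of `Cost(R, ·)` along the edge: a start-up edge adds the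
start-up cost of an empty VM, which leaves the penalty unchanged, and a placement edge adds the
query's running cost together with the change of penalty (placing a query at a vertex without
VMs is a loop of weight `0`). Summing along a path telescopes, and
the empty schedule has cost `0`. -/

section Cost

variable (P : List (VMType × List Query) → ℝ) (f_s f_r : VMType → ℝ)
  (l : Query → VMType → ℝ)

def vmCost (vm : VMType × List Query) : ℝ :=
  f_s vm.1 + (vm.2.map (fun q => f_r vm.1 * l q vm.1)).sum

def scheduleCost (s : List (VMType × List Query)) : ℝ :=
  (s.map (vmCost f_s f_r l)).sum + P s

theorem scheduleCost_nil (hPempty : P [] = 0) : scheduleCost P f_s f_r l [] = 0 := by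
  simp [scheduleCost, hPempty]

variable {P}

theorem edgeWeight_eq_sub [DecidableEq Query] (hPvm : ∀ s (i : VMType), P ((i, []) :: s) = P s)
    (v : SVertex Query VMType) (e : SEdge Query VMType) :
    edgeWeight P f_s f_r l v e =
      scheduleCost P f_s f_r l (applyEdge v e).vms - scheduleCost P f_s f_r l v.vms := by
  obtain ⟨vms, Q⟩ := v
  cases e with
  | startup i => simp [edgeWeight, applyEdge, scheduleCost, vmCost, hPvm]
  | place q =>
    cases vms with
    | nil => simp [edgeWeight, applyEdge]
    | cons hd tl =>
      simp only [edgeWeight, applyEdge, scheduleCost, vmCost, List.map_cons, List.map_append,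
        List.map_nil, List.sum_append, List.sum_cons, List.sum_nil, add_zero]
      ring

theorem pathWeight_eq_sub [DecidableEq Query] (hPvm : ∀ s (i : VMType), P ((i, []) :: s) = P s)
    (v : SVertex Query VMType) (es : List (SEdge Query VMType)) :
    pathWeight P f_s f_r l v es =
      scheduleCost P f_s f_r l (runPath v es).vms - scheduleCost P f_s f_r l v.vms := by
  induction es generalizing v with
  | nil => simp [pathWeight, runPath]
  | cons e es ih =>
    rw [pathWeight, runPath, ih, edgeWeight_eq_sub f_s f_r l hPvm]
    ring

end Cost

theorem stmt6_general [DecidableEq Query]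
    (P : List (VMType × List Query) → ℝ) (f_s f_r : VMType → ℝ)
    (l : Query → VMType → ℝ)
    (hPempty : P [] = 0)
    (hPvm : ∀ s (i : VMType), P ((i, []) :: s) = P s)
    (Q : Multiset Query)
    (es : List (SEdge Query VMType)) :
    pathWeight P f_s f_r l ⟨[], Q⟩ es =
      ((runPath (⟨[], Q⟩ : SVertex Query VMType) es).vms.map
        (fun vm => f_s vm.1 + (vm.2.map (fun q => f_r vm.1 * l q vm.1)).sum)).sum
      + P (runPath (⟨[], Q⟩ : SVertex Query VMType) es).vms := by
  rw [pathWeight_eq_sub f_s f_r l hPvm, scheduleCost_nil P f_s f_r l hPempty, sub_zero]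
  rfl

/-- The weight of any valid path from the start vertex to a goal vertex `g`
(no unassigned queries) equals the total cost `Cost(R, g_s)` of the complete
schedule `g_s`: the sum over VMs of the start-up cost plus per-query running
costs, plus the final penalty `P(R, g_s)`. -/
theorem stmt6 [DecidableEq Query]
    (P : List (VMType × List Query) → ℝ) (f_s f_r : VMType → ℝ)
    (l : Query → VMType → ℝ)
    (hPempty : P [] = 0)
    (hPvm : ∀ s (i : VMType), P ((i, []) :: s) = P s)
    (Q : Multiset Query)
    (es : List (SEdge Query VMType))
    (hvalid : ValidPath ⟨[], Q⟩ es)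
    (hgoal : (runPath (⟨[], Q⟩ : SVertex Query VMType) es).unassigned = 0) :
    pathWeight P f_s f_r l ⟨[], Q⟩ es =
      ((runPath (⟨[], Q⟩ : SVertex Query VMType) es).vms.map
        (fun vm => f_s vm.1 + (vm.2.map (fun q => f_r vm.1 * l q vm.1)).sum)).sum
      + P (runPath (⟨[], Q⟩ : SVertex Query VMType) es).vms :=
  stmt6_general P f_s f_r l hPempty hPvm Q es
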